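/- Let S be the decomposable operator on L²(X,μ;H) with measurable field T, and assume S is self-adjoint and T(ζ) is self-adjoint for μ-almost every ζ. Then S − i·1 is invertible, T(ζ) − i·1 is invertible for μ-almost every ζ, and the Cayley transform (S + i·1)·(S − i·1)⁻¹ is the decomposable operator with field ζ ↦ (T(ζ) + i·1)·(T(ζ) − i·1)⁻¹: for every g ∈ L²(X,μ;H), (((S + i·1)·Ring.inverse (S − i·1)) g)(ζ) = ((T(ζ) + i·1)·Ring.inverse (T(ζ) − i·1))(g(ζ)) for μ-almost every ζ ∈ X. -/

import Mathlib

/-!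
The spectrum of a self-adjoint element of a C⋆-algebra is real, so `a - i • 1` is invertible both
for `S` and for almost every `T ζ`. Decomposable operators are closed under sums, scalar multiples,
products and inverses (when the field is almost everywhere invertible), each time with the
pointwise operation on the fields, so the Cayley transform of `S` decomposes with the pointwise
Cayley transform of `T`.
-/

open MeasureTheory

/-- `T` is a measurable field of bounded operators: pointwise measurable and
essentially bounded in operator norm. -/
def MeasurableFieldOfOperators {X : Type*} [MeasurableSpace X]
    {H : Type*} [NormedAddCommGroup H] [InnerProductSpace ℂ H]
    [MeasurableSpace H] [BorelSpace H]
    (μ : Measure X) (T : X → H →L[ℂ] H) : Prop :=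
  (∀ x : H, Measurable fun ζ => T ζ x) ∧ ∃ C : ℝ, ∀ᵐ ζ ∂μ, ‖T ζ‖ ≤ C

/-- `S` is the decomposable operator on `L²(X, μ; H)` with field `T`. -/
def IsDecomposableOperatorWith {X : Type*} [MeasurableSpace X]
    {H : Type*} [NormedAddCommGroup H] [InnerProductSpace ℂ H]
    (μ : Measure X) (S : Lp H 2 μ →L[ℂ] Lp H 2 μ) (T : X → H →L[ℂ] H) : Prop :=
  ∀ f : Lp H 2 μ, ∀ᵐ ζ ∂μ, (S f : X → H) ζ = T ζ ((f : X → H) ζ)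

theorem IsSelfAdjoint.isUnit_sub_smul_one {A : Type*} [CStarAlgebra A] {a : A}
    (ha : IsSelfAdjoint a) {z : ℂ} (hz : z.im ≠ 0) : IsUnit (a - z • (1 : A)) := by
  have hz' : z ∉ spectrum ℂ a := fun h => hz (ha.im_eq_zero_of_mem_spectrum h)
  rw [spectrum.notMem_iff, Algebra.algebraMap_eq_smul_one] at hz'
  exact IsUnit.sub_iff.mp hz'

namespace IsDecomposableOperatorWith

variable {X : Type*} [MeasurableSpace X] {μ : Measure X}
  {H : Type*} [NormedAddCommGroup H] [InnerProductSpace ℂ H]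
  {S S' : Lp H 2 μ →L[ℂ] Lp H 2 μ} {T T' : X → H →L[ℂ] H}

theorem one : IsDecomposableOperatorWith μ 1 fun _ => (1 : H →L[ℂ] H) :=
  fun _ => Filter.Eventually.of_forall fun _ => rfl

theorem smul (c : ℂ) (hS : IsDecomposableOperatorWith μ S T) :
    IsDecomposableOperatorWith μ (c • S) fun ζ => c • T ζ := by
  intro f
  filter_upwards [hS f, Lp.coeFn_smul c (S f)] with ζ h hsmul
  rw [smul_apply, hsmul, Pi.smul_apply, h]
  rfl

theorem add (hS : IsDecomposableOperatorWith μ S T) (hS' : IsDecomposableOperatorWith μ S' T') :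
    IsDecomposableOperatorWith μ (S + S') fun ζ => T ζ + T' ζ := by
  intro f
  filter_upwards [hS f, hS' f, Lp.coeFn_add (S f) (S' f)] with ζ h h' hadd
  rw [add_apply, hadd, Pi.add_apply, h, h']
  rfl

theorem sub (hS : IsDecomposableOperatorWith μ S T) (hS' : IsDecomposableOperatorWith μ S' T') :
    IsDecomposableOperatorWith μ (S - S') fun ζ => T ζ - T' ζ := by
  intro f
  filter_upwards [hS f, hS' f, Lp.coeFn_sub (S f) (S' f)] with ζ h h' hsub
  rw [sub_apply, hsub, Pi.sub_apply, h, h']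
  rfl

theorem mul (hS : IsDecomposableOperatorWith μ S T) (hS' : IsDecomposableOperatorWith μ S' T') :
    IsDecomposableOperatorWith μ (S * S') fun ζ => T ζ * T' ζ := by
  intro f
  filter_upwards [hS (S' f), hS' f] with ζ h h'
  simp [h, h']

theorem ring_inverse (hS : IsDecomposableOperatorWith μ S T) (hSu : IsUnit S)
    (hTu : ∀ᵐ ζ ∂μ, IsUnit (T ζ)) :
    IsDecomposableOperatorWith μ (Ring.inverse S) fun ζ => Ring.inverse (T ζ) := by
  intro g
  filter_upwards [hS (Ring.inverse S g), hTu] with ζ h hu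
  have hg : S (Ring.inverse S g) = g := congr($(Ring.mul_inverse_cancel S hSu) g)
  rw [hg] at h
  rw [h]
  exact congr($(Ring.inverse_mul_cancel _ hu) _).symm

end IsDecomposableOperatorWith

theorem cayley_transform_of_decomposable_general
    {X : Type*} [MeasurableSpace X]
    {μ : Measure X}
    {H : Type*} [NormedAddCommGroup H] [InnerProductSpace ℂ H]
    [CompleteSpace H]
    (T : X → H →L[ℂ] H)
    (S : Lp H 2 μ →L[ℂ] Lp H 2 μ) (hS : IsDecomposableOperatorWith μ S T)
    (hSsa : IsSelfAdjoint S) (hTsa : ∀ᵐ ζ ∂μ, IsSelfAdjoint (T ζ)) :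
    IsUnit (S - Complex.I • (1 : Lp H 2 μ →L[ℂ] Lp H 2 μ)) ∧
    (∀ᵐ ζ ∂μ, IsUnit (T ζ - Complex.I • (1 : H →L[ℂ] H))) ∧
    IsDecomposableOperatorWith μ
      ((S + Complex.I • 1) * Ring.inverse (S - Complex.I • 1))
      (fun ζ => (T ζ + Complex.I • 1) * Ring.inverse (T ζ - Complex.I • 1)) := by
  have hI : Complex.I.im ≠ 0 := by simp
  have hSu := hSsa.isUnit_sub_smul_one hI
  have hTu : ∀ᵐ ζ ∂μ, IsUnit (T ζ - Complex.I • (1 : H →L[ℂ] H)) :=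
    hTsa.mono fun _ h => h.isUnit_sub_smul_one hI
  refine ⟨hSu, hTu, ?_⟩
  have hIone := IsDecomposableOperatorWith.one (μ := μ) (H := H) |>.smul Complex.I
  exact (hS.add hIone).mul ((hS.sub hIone).ring_inverse hSu hTu)

theorem cayley_transform_of_decomposable
    {X : Type*} [MeasurableSpace X] [StandardBorelSpace X]
    {μ : Measure X} [SigmaFinite μ]
    {H : Type*} [NormedAddCommGroup H] [InnerProductSpace ℂ H]
    [CompleteSpace H] [SecondCountableTopology H] [MeasurableSpace H] [BorelSpace H]
    (T : X → H →L[ℂ] H) (hT : MeasurableFieldOfOperators μ T)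
    (S : Lp H 2 μ →L[ℂ] Lp H 2 μ) (hS : IsDecomposableOperatorWith μ S T)
    (hSsa : IsSelfAdjoint S) (hTsa : ∀ᵐ ζ ∂μ, IsSelfAdjoint (T ζ)) :
    IsUnit (S - Complex.I • (1 : Lp H 2 μ →L[ℂ] Lp H 2 μ)) ∧
    (∀ᵐ ζ ∂μ, IsUnit (T ζ - Complex.I • (1 : H →L[ℂ] H))) ∧
    IsDecomposableOperatorWith μ
      ((S + Complex.I • 1) * Ring.inverse (S - Complex.I • 1))
      (fun ζ => (T ζ + Complex.I • 1) * Ring.inverse (T ζ - Complex.I • 1)) :=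
  cayley_transform_of_decomposable_general T S hS hSsa hTsa
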